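/- Let C be a Grothendieck category and (U,θ,η) a monad on C whose underlying endofunctor U is exact and preserves colimits. Then the Eilenberg-Moore category EM_U of U-modules is a Grothendieck category, in which colimits and finite limits are computed on underlying objects in C. -/

import Mathlib

/-!
The forgetful functor `EM_T ⥤ C` creates limits, and creates colimits because `T` preserves
them; so it is exact and reflects isomorphisms. It therefore carries the coimage-image
comparisons and the comparison maps of AB5 down to `C`, where they are isomorphisms, and reflects
them back. Being faithful, it makes the free algebra on a separator of `C` a separator of `EM_T`.
-/

open CategoryTheory CategoryTheory.Limits Opposite

universe w v u u₂ v₂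

namespace Paper

variable {C : Type u} [Category.{v} C]

/-- A partially ordered set `J` is `κ`-directed if every subset of cardinality `< κ`
has an upper bound. -/
def IsKappaDirected (κ : Cardinal.{v}) (J : Type v) [Preorder J] : Prop :=
  ∀ S : Set J, Cardinal.mk S < κ → ∃ j : J, ∀ s ∈ S, s ≤ j

/-- An object `M` is `κ`-presentable if `C(M,-)` preserves colimits of
`κ`-directed diagrams. -/
def IsPresentable (κ : Cardinal.{v}) (M : C) : Prop :=
  ∀ (J : Type v) [PartialOrder J], IsKappaDirected κ J →
    PreservesColimitsOfShape J (coyoneda.obj (op M))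

/-- A category is locally `κ`-presentable if it is cocomplete and has a small
separating family of `κ`-presentable objects. -/
def IsLocallyKappaPresentable (κ : Cardinal.{v₂}) (A : Type u₂) [Category.{v₂} A] : Prop :=
  ∃ (_ : HasColimits A) (S : Set A), Small.{v₂} S ∧ (∀ M ∈ S, IsPresentable κ M) ∧
    ObjectProperty.IsSeparating (S : ObjectProperty A)

/-- A category is locally presentable if it is locally `κ`-presentable for some
regular cardinal `κ`. -/
def IsLocallyPresentable (A : Type u₂) [Category.{v₂} A] : Prop :=
  ∃ κ : Cardinal.{v₂}, κ.IsRegular ∧ IsLocallyKappaPresentable κ A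

/-- Filtered colimits exist when all colimits do. -/
def hasFilteredOfHasColimits {A : Type u₂} [Category.{v₂} A] (hc : HasColimits A) :
    HasFilteredColimits A :=
  ⟨fun I _ _ => hc.has_colimits_of_shape I⟩

/-- A Grothendieck category: abelian, cocomplete, AB5, with a generator. -/
def IsGrothendieckCategory (A : Type u₂) [Category.{v₂} A] : Prop :=
  ∃ (_ : Abelian A) (hc : HasColimits A),
    @AB5 A _ (hasFilteredOfHasColimits hc) ∧ ∃ G : A, IsSeparator G

section MonadQuiver

variable {Q : Type v} [SmallCategory Q] (𝒰 : Q ⥤ Monad C)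

/-- A module over a monad quiver `𝒰 : Q ⥤ Mnd(C)`: a family of Eilenberg-Moore
algebras `pt x ∈ EM_{𝒰 x}` together with compatible structure morphisms
`pt x ⟶ (𝒰 φ)_* (pt y)` for each arrow `φ : x ⟶ y`. -/
structure UMod where
  pt : ∀ x : Q, (𝒰.obj x).Algebra
  tr : ∀ {x y : Q}, (x ⟶ y) → ((pt x).A ⟶ (pt y).A)
  compat : ∀ {x y : Q} (φ : x ⟶ y),
    (𝒰.obj x).toFunctor.map (tr φ) ≫ ((𝒰.map φ).app (pt y).A ≫ (pt y).a) =
      (pt x).a ≫ tr φ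
  tr_id : ∀ x : Q, tr (𝟙 x) = 𝟙 (pt x).A
  tr_comp : ∀ {x y z : Q} (φ : x ⟶ y) (ψ : y ⟶ z), tr (φ ≫ ψ) = tr φ ≫ tr ψ

variable {𝒰}

/-- Morphisms of modules over a monad quiver. -/
structure UModHom (M N : UMod 𝒰) where
  app : ∀ x : Q, (M.pt x).A ⟶ (N.pt x).A
  halg : ∀ x : Q,
    (𝒰.obj x).toFunctor.map (app x) ≫ (N.pt x).a = (M.pt x).a ≫ app x
  hcomm : ∀ {x y : Q} (φ : x ⟶ y), M.tr φ ≫ app y = app x ≫ N.tr φ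

theorem UModHom.ext' {M N : UMod 𝒰} {f g : UModHom M N} (h : f.app = g.app) : f = g := by
  cases f; cases g; cases h; rfl

instance : Category (UMod 𝒰) where
  Hom := UModHom
  id M :=
    { app := fun x => 𝟙 _
      halg := fun x => by simp
      hcomm := fun φ => by simp }
  comp {M N P} f g :=
    { app := fun x => f.app x ≫ g.app x
      halg := fun x => by
        rw [Functor.map_comp, Category.assoc, g.halg x, ← Category.assoc, f.halg x,
          Category.assoc]
      hcomm := fun φ => by
        rw [← Category.assoc, f.hcomm φ, Category.assoc, g.hcomm φ, ← Category.assoc] }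
  id_comp f := UModHom.ext' (by funext x; exact Category.id_comp _)
  comp_id f := UModHom.ext' (by funext x; exact Category.comp_id _)
  assoc f g h := UModHom.ext' (by funext x; exact Category.assoc _ _ _)

variable (𝒰)

/-- Evaluation of a `𝒰`-module at a vertex `x`. -/
def ev (x : Q) : UMod 𝒰 ⥤ (𝒰.obj x).Algebra where
  obj M := M.pt x
  map f := { f := f.app x, h := f.halg x }
  map_id _ := rfl
  map_comp _ _ := rfl

variable {𝒰}

/-- The structure morphism of a module, as a morphism `pt x ⟶ φ_* (pt y)` of
Eilenberg-Moore algebras. -/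
def UMod.trHom (M : UMod 𝒰) {x y : Q} (φ : x ⟶ y) :
    M.pt x ⟶ (Monad.algebraFunctorOfMonadHom (𝒰.map φ)).obj (M.pt y) :=
  { f := M.tr φ
    h := M.compat φ }

/-- `M` is cartesian at the edge `φ : x ⟶ y` if the structure morphism
`pt x ⟶ φ_* (pt y)` is a universal arrow; equivalently the adjoint transpose
`φ^* (pt x) ⟶ pt y` is an isomorphism. -/
def IsCartesianAt (M : UMod 𝒰) {x y : Q} (φ : x ⟶ y) : Prop :=
  ∀ (N : (𝒰.obj y).Algebra) (g : M.pt x ⟶ (Monad.algebraFunctorOfMonadHom (𝒰.map φ)).obj N),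
    ∃! h : M.pt y ⟶ N,
      M.trHom φ ≫ (Monad.algebraFunctorOfMonadHom (𝒰.map φ)).map h = g

end MonadQuiver

/-- `P` together with `η : M ⟶ φ_* P` is a reflection of `M` along restriction of
scalars, i.e. `η` exhibits `P` as `φ^* M`. -/
def IsExtension {T₁ T₂ : Monad C} (φ : T₁ ⟶ T₂) (M : T₁.Algebra) (P : T₂.Algebra)
    (η : M ⟶ (Monad.algebraFunctorOfMonadHom φ).obj P) : Prop :=
  ∀ (N : T₂.Algebra) (g : M ⟶ (Monad.algebraFunctorOfMonadHom φ).obj N),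
    ∃! h : P ⟶ N, η ≫ (Monad.algebraFunctorOfMonadHom φ).map h = g

/-- A monad morphism `φ` is flat if the left adjoint `φ^*` of the restriction
functor `φ_*` is exact. -/
def IsFlatMonadHom {T₁ T₂ : Monad C} (φ : T₁ ⟶ T₂) : Prop :=
  ∀ (L : T₁.Algebra ⥤ T₂.Algebra),
    Nonempty (L ⊣ Monad.algebraFunctorOfMonadHom φ) → PreservesFiniteLimits L

theorem isIso_coimageImageComparison_of_reflectsIsomorphisms {A : Type u} [Category.{v} A]
    [HasZeroMorphisms A] [HasFiniteLimits A] [HasFiniteColimits A]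
    {B : Type u₂} [Category.{v₂} B] [HasZeroMorphisms B] [HasFiniteLimits B] [HasFiniteColimits B]
    (F : A ⥤ B) [F.PreservesZeroMorphisms] [PreservesFiniteLimits F] [PreservesFiniteColimits F]
    [F.ReflectsIsomorphisms] {X Y : A} (f : X ⟶ Y)
    [IsIso (Abelian.coimageImageComparison (F.map f))] :
    IsIso (Abelian.coimageImageComparison f) :=
  have : IsIso (F.map (Abelian.coimageImageComparison f)) :=
    IsIso.of_isIso_fac_right (Abelian.PreservesCoimage.hom_coimageImageComparison F f).symm
  isIso_of_reflects_iso _ F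

theorem ab5_of_preservesFiniteLimits_of_reflectsFiniteLimits {A : Type u} [Category.{v} A]
    [HasFiniteLimits A] [HasFilteredColimits A]
    {B : Type u₂} [Category.{v} B] [HasFilteredColimits B] [AB5 B]
    (F : A ⥤ B) [PreservesFiniteLimits F] [ReflectsFiniteLimits F] [PreservesFilteredColimits F] :
    AB5 A :=
  ⟨fun J _ _ => HasExactColimitsOfShape.domain_of_functor J F⟩

theorem Adjunction.isSeparator_obj {A : Type u} [Category.{v} A] {B : Type u₂} [Category.{v₂} B]
    {F : A ⥤ B} {G : B ⥤ A} (adj : F ⊣ G) [G.Faithful] {X : A} (hX : IsSeparator X) :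
    IsSeparator (F.obj X) := by
  refine (isSeparator_def _).2 fun Y Z f g h => G.map_injective (hX.def _ _ fun u => ?_)
  rw [← (adj.homEquiv X Y).apply_symm_apply u, ← adj.homEquiv_naturality_right,
    ← adj.homEquiv_naturality_right, h]

/-- the Eilenberg-Moore category of an exact colimit-preserving monad
on a Grothendieck category is Grothendieck, with colimits and finite limits computed
on underlying objects (Proposition 3.1). -/
theorem em_isGrothendieck {C : Type u} [Category.{v} C] [Abelian C] [HasColimits C] [AB5 C]
    (G : C) (hG : IsSeparator G) (T : Monad C)
    [PreservesFiniteLimits T.toFunctor] [PreservesColimits T.toFunctor] :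
    IsGrothendieckCategory T.Algebra ∧
      PreservesColimits T.forget ∧ PreservesFiniteLimits T.forget := by
  have : T.toFunctor.Additive := Functor.additive_of_preserves_binary_products _
  have : HasFiniteLimits T.Algebra :=
    ⟨fun _ _ _ => hasLimitsOfShape_of_hasLimitsOfShape_createsLimitsOfShape T.forget⟩
  have hc : HasColimits T.Algebra := hasColimits_of_hasColimits_createsColimits T.forget
  have : ∀ {X Y : T.Algebra} (f : X ⟶ Y), IsIso (Abelian.coimageImageComparison f) :=
    fun f => isIso_coimageImageComparison_of_reflectsIsomorphisms T.forget f
  have := hasFilteredOfHasColimits hc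
  exact ⟨⟨.ofCoimageImageComparisonIsIso, hc,
    ab5_of_preservesFiniteLimits_of_reflectsFiniteLimits T.forget,
    T.free.obj G, Adjunction.isSeparator_obj T.adj hG⟩, inferInstance, inferInstance⟩

end Paper
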